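/- arXiv:2104.07293 — 5 statements merged into one kernel-verified Lean document; each statement's English description precedes it below -/
import Mathlib

section
/- If P and P' are annotated processes such that P ⇒ P' (one step of the annotated parallel reduction), then the local complexity satisfies ℓ(P') ≥ ℓ(P). -/
namespace PiSpan

/-! ### Annotated processes -/

/-- Variables / channel names. -/
abbrev Name := ℕ

/-- Expressions: variables, zero, successor. -/
inductive Expr where
  | var : Name → Expr
  | zero : Expr
  | succ : Expr → Expr
  deriving DecidableEq

/-- Free variables of an expression. -/
def Expr.fv : Expr → Finset Name
  | .var x => {x}
  | .zero => ∅
  | .succ e => e.fv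

/-- Substitution of the expression `e` for the variable `v` in an expression. -/
def Expr.subst : Expr → Name → Expr → Expr
  | .var x, v, e => if x = v then e else .var x
  | .zero, _, _ => .zero
  | .succ e', v, e => .succ (e'.subst v e)

/-- Annotated processes: π-calculus processes with tick, extended with the
annotation construct `n : P`. -/
inductive AProc where
  | nil : AProc
  | par : AProc → AProc → AProc
  | repIn : Name → List Name → AProc → AProc
  | inp : Name → List Name → AProc → AProc
  | out : Name → List Expr → AProc → AProc
  | nu : Name → AProc → AProc
  | tick : AProc → AProc
  | case : Expr → AProc → Name → AProc → AProc
  | annot : ℕ → AProc → AProc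
  deriving DecidableEq

/-- Substitution in channel-name position: a name is replaced only by a name. -/
def substName (a : Name) (v : Name) (e : Expr) : Name :=
  if a = v then (match e with | .var b => b | _ => a) else a

/-- Substitution of the expression `e` for the variable `v` in a process. -/
def AProc.subst : AProc → Name → Expr → AProc
  | .nil, _, _ => .nil
  | .par P Q, v, e => .par (P.subst v e) (Q.subst v e)
  | .repIn a xs P, v, e =>
      .repIn (substName a v e) xs (if v ∈ xs then P else P.subst v e)
  | .inp a xs P, v, e =>
      .inp (substName a v e) xs (if v ∈ xs then P else P.subst v e)
  | .out a es P, v, e =>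
      .out (substName a v e) (es.map (fun e' => e'.subst v e)) (P.subst v e)
  | .nu a P, v, e => .nu a (if v = a then P else P.subst v e)
  | .tick P, v, e => .tick (P.subst v e)
  | .case e' P x Q, v, e =>
      .case (e'.subst v e) (P.subst v e) x (if v = x then Q else Q.subst v e)
  | .annot n P, v, e => .annot n (P.subst v e)

/-- Simultaneous substitution `P[ē/x̄]`. -/
def AProc.msubst (P : AProc) (xs : List Name) (es : List Expr) : AProc :=
  (xs.zip es).foldl (fun P p => P.subst p.1 p.2) P

/-- Free names/variables of an annotated process. -/
def AProc.fn : AProc → Finset Name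
  | .nil => ∅
  | .par P Q => P.fn ∪ Q.fn
  | .repIn a xs P => insert a (P.fn \ xs.toFinset)
  | .inp a xs P => insert a (P.fn \ xs.toFinset)
  | .out a es P => insert a ((es.foldr (fun e s => e.fv ∪ s) ∅) ∪ P.fn)
  | .nu a P => P.fn \ {a}
  | .tick P => P.fn
  | .case e P x Q => e.fv ∪ P.fn ∪ (Q.fn \ {x})
  | .annot _ P => P.fn

/-- Structural congruence on annotated processes. -/
inductive ACongr : AProc → AProc → Prop
  | refl : ACongr P P
  | symm : ACongr P Q → ACongr Q P
  | trans : ACongr P Q → ACongr Q R → ACongr P R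
  | parNil : ACongr (.par P .nil) P
  | parComm : ACongr (.par P Q) (.par Q P)
  | parAssoc : ACongr (.par P (.par Q R)) (.par (.par P Q) R)
  | nuSwap : ACongr (.nu a (.nu b P)) (.nu b (.nu a P))
  | nuPar : a ∉ AProc.fn Q → ACongr (.nu a (.par P Q)) (.par (.nu a P) Q)
  | annotZero : ACongr (.annot 0 P) P
  | annotPar : ACongr (.annot m (.par P Q)) (.par (.annot m P) (.annot m Q))
  | annotNu : ACongr (.annot m (.nu a P)) (.nu a (.annot m P))
  | annotAnnot : ACongr (.annot m (.annot n P)) (.annot (m + n) P)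
  | parCtx : ACongr P P' → ACongr Q Q' → ACongr (.par P Q) (.par P' Q')
  | repInCtx : ACongr P P' → ACongr (.repIn a xs P) (.repIn a xs P')
  | inpCtx : ACongr P P' → ACongr (.inp a xs P) (.inp a xs P')
  | outCtx : ACongr P P' → ACongr (.out a es P) (.out a es P')
  | nuCtx : ACongr P P' → ACongr (.nu a P) (.nu a P')
  | tickCtx : ACongr P P' → ACongr (.tick P) (.tick P')
  | caseCtx : ACongr P P' → ACongr Q Q' → ACongr (.case e P x Q) (.case e P' x Q')
  | annotCtx : ACongr P P' → ACongr (.annot n P) (.annot n P')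

/-- The reduction relation `⇒` on annotated processes. -/
inductive ARed : AProc → AProc → Prop
  | comm : ARed (.par (.annot n (.inp a xs P)) (.annot m (.out a es Q)))
      (.annot (max m n) (.par (P.msubst xs es) Q))
  | commRep : ARed (.par (.annot n (.repIn a xs P)) (.annot m (.out a es Q)))
      (.par (.annot n (.repIn a xs P)) (.annot (max m n) (.par (P.msubst xs es) Q)))
  | tick : ARed (.tick P) (.annot 1 P)
  | caseZero : ARed (.case .zero P x Q) P
  | caseSucc : ARed (.case (.succ e) P x Q) (Q.subst x e)
  | parCtx : ARed P Q → ARed (.par P R) (.par Q R)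
  | nuCtx : ARed P Q → ARed (.nu a P) (.nu a Q)
  | annotCtx : ARed P Q → ARed (.annot n P) (.annot n Q)
  | congr : ACongr P P' → ARed P' Q' → ACongr Q' Q → ARed P Q

/-- Local complexity of an annotated process. -/
def AProc.lc : AProc → ℕ
  | .annot n P => n + P.lc
  | .par P Q => max P.lc Q.lc
  | .nu _ P => P.lc
  | _ => 0

lemma lc_congr {P Q : AProc} (h : ACongr P Q) : AProc.lc P = AProc.lc Q := by
  induction h <;> simp_all [AProc.lc] <;> omega

/-- Reduction of annotated processes does not decrease the
local complexity: if `P ⇒ P'` then `ℓ(P') ≥ ℓ(P)`. -/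
theorem lc_mono_of_ared (P P' : AProc) (h : ARed P P') :
    AProc.lc P ≤ AProc.lc P' := by
  induction h with
  | comm => simp [AProc.lc]; omega
  | commRep => simp [AProc.lc]; omega
  | tick => simp [AProc.lc]
  | caseZero => simp [AProc.lc]
  | caseSucc => simp [AProc.lc]
  | parCtx _ ih => simp [AProc.lc]; omega
  | nuCtx _ ih => simpa [AProc.lc] using ih
  | annotCtx _ ih => simp [AProc.lc]; omega
  | congr h1 _ h2 ih => rw [lc_congr h1, lc_congr h2] at *; exact ih


end PiSpan
end

section
/- If φ; Φ ⊢ U ⊑ V holds for usages U and V, then for any obligation interval A_o one has φ; Φ ⊢ ↑^{A_o}U ⊑ ↑^{A_o}V; that is, the subusage relation is preserved by the delaying operation. -/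
namespace PiSpan

/-! ### Indices: integer expressions over index variables, with `∞` -/

abbrev IVar := ℕ

/-- Indices, built from index variables, function symbols (constants, addition,
multiplication, truncated subtraction, max, min) and `∞`. -/
inductive Idx : Type where
  | var : IVar → Idx
  | const : ℕ → Idx
  | add : Idx → Idx → Idx
  | mul : Idx → Idx → Idx
  | sub : Idx → Idx → Idx
  | imax : Idx → Idx → Idx
  | imin : Idx → Idx → Idx
  | inf : Idx
  deriving DecidableEq

/-- Valuations of index variables. -/
abbrev Val := IVar → ℕ

/-- Interpretation of an index in `ℕ∞` under a valuation. -/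
noncomputable def Idx.eval (ρ : Val) : Idx → ℕ∞
  | .var i => (ρ i : ℕ∞)
  | .const n => (n : ℕ∞)
  | .add I J => I.eval ρ + J.eval ρ
  | .mul I J => I.eval ρ * J.eval ρ
  | .sub I J => I.eval ρ - J.eval ρ
  | .imax I J => max (I.eval ρ) (J.eval ρ)
  | .imin I J => min (I.eval ρ) (J.eval ρ)
  | .inf => ⊤

/-- Free index variables of an index. -/
def Idx.fv : Idx → Finset IVar
  | .var i => {i}
  | .const _ => ∅
  | .add I J => I.fv ∪ J.fv
  | .mul I J => I.fv ∪ J.fv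
  | .sub I J => I.fv ∪ J.fv
  | .imax I J => I.fv ∪ J.fv
  | .imin I J => I.fv ∪ J.fv
  | .inf => ∅

/-- Substitution of the index `J` for the index variable `i`. -/
def Idx.subst : Idx → IVar → Idx → Idx
  | .var x, i, J => if x = i then J else .var x
  | .const n, _, _ => .const n
  | .add a b, i, J => .add (a.subst i J) (b.subst i J)
  | .mul a b, i, J => .mul (a.subst i J) (b.subst i J)
  | .sub a b, i, J => .sub (a.subst i J) (b.subst i J)
  | .imax a b, i, J => .imax (a.subst i J) (b.subst i J)
  | .imin a b, i, J => .imin (a.subst i J) (b.subst i J)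
  | .inf, _, _ => .inf

/-- A constraint `I ⋈ J` between two indices, for a binary relation `⋈` on `ℕ∞`. -/
structure Constraint where
  lhs : Idx
  rel : ℕ∞ → ℕ∞ → Prop
  rhs : Idx

/-- Satisfaction of a constraint by a valuation. -/
def Constraint.sat (ρ : Val) (C : Constraint) : Prop :=
  C.rel (C.lhs.eval ρ) (C.rhs.eval ρ)

def Constraint.fv (C : Constraint) : Finset IVar := C.lhs.fv ∪ C.rhs.fv

def Constraint.subst (C : Constraint) (i : IVar) (J : Idx) : Constraint :=
  ⟨C.lhs.subst i J, C.rel, C.rhs.subst i J⟩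

/-- A (finite) set of constraints. -/
abbrev CSet := List Constraint

def satAll (ρ : Val) (Φ : CSet) : Prop := ∀ C ∈ Φ, C.sat ρ

/-- `entails φ Φ C` : every valuation satisfying `Φ` satisfies `C`. -/
def entails (_φ : Finset IVar) (Φ : CSet) (C : Constraint) : Prop :=
  ∀ ρ : Val, satAll ρ Φ → C.sat ρ

/-- Semantic comparison of indices under the constraints `Φ`. -/
def semLe (_φ : Finset IVar) (Φ : CSet) (I J : Idx) : Prop :=
  ∀ ρ : Val, satAll ρ Φ → I.eval ρ ≤ J.eval ρ

/-- Intervals `[I, J]` of indices. -/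
structure Interval where
  lo : Idx
  hi : Idx
  deriving DecidableEq

def Interval.subst (A : Interval) (i : IVar) (J : Idx) : Interval :=
  ⟨A.lo.subst i J, A.hi.subst i J⟩

/-- `semIncl φ Φ A B` : the interval `A` is included in `B`, under every
valuation satisfying `Φ`. -/
def semIncl (_φ : Finset IVar) (Φ : CSet) (A B : Interval) : Prop :=
  ∀ ρ : Val, satAll ρ Φ → B.lo.eval ρ ≤ A.lo.eval ρ ∧ A.hi.eval ρ ≤ B.hi.eval ρ

/-- Semantic equality of intervals under the constraints `Φ`. -/
def semEqI (_φ : Finset IVar) (Φ : CSet) (A B : Interval) : Prop :=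
  ∀ ρ : Val, satAll ρ Φ → A.lo.eval ρ = B.lo.eval ρ ∧ A.hi.eval ρ = B.hi.eval ρ

/-- Capacities: either a single index `J` (to be understood as `[-∞, J]`)
or an interval `[I, J]`. -/
inductive Cap where
  | single : Idx → Cap
  | intv : Idx → Idx → Cap
  deriving DecidableEq

def Cap.subst : Cap → IVar → Idx → Cap
  | .single a, i, J => .single (a.subst i J)
  | .intv a b, i, J => .intv (a.subst i J) (b.subst i J)

/-- `capLe φ Φ c d` : inclusion of capacities, a single index `J` being
understood as the interval `[-∞, J]`. -/
def capLe (φ : Finset IVar) (Φ : CSet) : Cap → Cap → Prop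
  | .single I, .single J => semLe φ Φ I J
  | .single _, .intv _ _ => False
  | .intv _ J, .single J' => semLe φ Φ J J'
  | .intv I J, .intv I' J' => semLe φ Φ I' I ∧ semLe φ Φ J J'

/-- Componentwise sum of intervals: `[I,J] + [I',J'] = [I+I', J+J']`. -/
def Interval.add (A B : Interval) : Interval := ⟨A.lo.add B.lo, A.hi.add B.hi⟩

/-- Sum of an interval and a capacity: `[I,J] + J' = [I, J+J']` (single index)
and componentwise sum for an interval capacity. -/
def Interval.addCap (A : Interval) : Cap → Interval
  | .single J => ⟨A.lo, A.hi.add J⟩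
  | .intv I J => ⟨A.lo.add I, A.hi.add J⟩

/-- The operation `⊞`: `A ⊞ J = [0, lo(A)+J]` and `A ⊞ [I,J] = [hi(A)+I, lo(A)+J]`. -/
def Interval.boxPlus (A : Interval) : Cap → Interval
  | .single J => ⟨.const 0, A.lo.add J⟩
  | .intv I J => ⟨A.hi.add I, A.lo.add J⟩

/-- The join `[I,J] ⊔ [I',J'] = [max(I,I'), max(J,J')]`. -/
def Interval.join (A B : Interval) : Interval := ⟨A.lo.imax B.lo, A.hi.imax B.hi⟩

def zeroI : Interval := ⟨.const 0, .const 0⟩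
def oneI : Interval := ⟨.const 1, .const 1⟩
def constI (n : ℕ) : Interval := ⟨.const n, .const n⟩

/-! ### Usages -/

/-- Usages: CCS-like processes on a single channel, where each action carries
an obligation interval and a capacity. -/
inductive Usage where
  | nil : Usage
  | par : Usage → Usage → Usage
  | inp : Interval → Cap → Usage → Usage
  | out : Interval → Cap → Usage → Usage
  | bang : Usage → Usage
  | choice : Usage → Usage → Usage
  deriving DecidableEq

/-- Delaying `↑^{A}U` : adds `A` to the obligation of every top-level action. -/
def Usage.delay (A : Interval) : Usage → Usage
  | .nil => .nil
  | .par U V => .par (U.delay A) (V.delay A)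
  | .inp B c U => .inp (A.add B) c U
  | .out B c U => .out (A.add B) c U
  | .bang U => .bang (U.delay A)
  | .choice U V => .choice (U.delay A) (V.delay A)

/-- Delaying by a capacity `↑^{J_c}U`. -/
def Usage.delayCap (c : Cap) : Usage → Usage
  | .nil => .nil
  | .par U V => .par (U.delayCap c) (V.delayCap c)
  | .inp B d U => .inp (B.addCap c) d U
  | .out B d U => .out (B.addCap c) d U
  | .bang U => .bang (U.delayCap c)
  | .choice U V => .choice (U.delayCap c) (V.delayCap c)

def Usage.subst : Usage → IVar → Idx → Usage
  | .nil, _, _ => .nil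
  | .par U V, i, J => .par (U.subst i J) (V.subst i J)
  | .inp B c U, i, J => .inp (B.subst i J) (c.subst i J) (U.subst i J)
  | .out B c U, i, J => .out (B.subst i J) (c.subst i J) (U.subst i J)
  | .bang U, i, J => .bang (U.subst i J)
  | .choice U V, i, J => .choice (U.subst i J) (V.subst i J)

/-- Congruence on usages. -/
inductive UCongr : Usage → Usage → Prop
  | refl : UCongr U U
  | symm : UCongr U V → UCongr V U
  | trans : UCongr U V → UCongr V W → UCongr U W
  | parNil : UCongr (.par U .nil) U
  | parComm : UCongr (.par U V) (.par V U)
  | parAssoc : UCongr (.par U (.par V W)) (.par (.par U V) W)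
  | bangNil : UCongr (.bang .nil) .nil
  | bangUnfold : UCongr (.bang U) (.par (.bang U) U)
  | bangPar : UCongr (.bang (.par U V)) (.par (.bang U) (.bang V))
  | bangBang : UCongr (.bang (.bang U)) (.bang U)
  | parCtx : UCongr U U' → UCongr V V' → UCongr (.par U V) (.par U' V')
  | inpCtx : UCongr U U' → UCongr (.inp A c U) (.inp A c U')
  | outCtx : UCongr U U' → UCongr (.out A c U) (.out A c U')
  | bangCtx : UCongr U U' → UCongr (.bang U) (.bang U')
  | choiceCtx : UCongr U U' → UCongr V V' → UCongr (.choice U V) (.choice U' V')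

/-- Result of a usage reduction step: a usage, or the error `Error`. -/
inductive URes where
  | ok : Usage → URes
  | err : URes

/-- Congruence extended to reduction results. -/
inductive RCongr : URes → URes → Prop
  | ok : UCongr U V → RCongr (.ok U) (.ok V)
  | err : RCongr .err .err

/-- Side condition for a successful synchronization:
`Φ ⊨ B ⊆ A ⊞ I_c` and `Φ ⊨ A ⊆ B ⊞ J_c`. -/
def goodSync (φ : Finset IVar) (Φ : CSet) (A : Interval) (ic : Cap)
    (B : Interval) (jc : Cap) : Prop :=
  semIncl φ Φ B (A.boxPlus ic) ∧ semIncl φ Φ A (B.boxPlus jc)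

/-- Reduction of usages (possibly to `Error`). -/
inductive URed (φ : Finset IVar) (Φ : CSet) : Usage → URes → Prop
  | comm : goodSync φ Φ A ic B jc →
      URed φ Φ (.par (.inp A ic U) (.out B jc V)) (.ok ((U.par V).delay (A.join B)))
  | commErr : ¬ goodSync φ Φ A ic B jc →
      URed φ Φ (.par (.inp A ic U) (.out B jc V)) .err
  | choiceL : URed φ Φ (.choice U V) (.ok U)
  | choiceR : URed φ Φ (.choice U V) (.ok V)
  | parCtx : URed φ Φ U (.ok U') → URed φ Φ (.par U V) (.ok (.par U' V))
  | parErr : URed φ Φ U .err → URed φ Φ (.par U V) .err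
  | congr : UCongr U U' → URed φ Φ U' R' → RCongr R' R → URed φ Φ U R

/-- Multi-step reduction of usages (never going through an error). -/
def URedStar (φ : Finset IVar) (Φ : CSet) : Usage → Usage → Prop :=
  Relation.ReflTransGen (fun U V => URed φ Φ U (.ok V))

/-- Multi-step reduction towards a result, possibly ending with an error step. -/
def URedStarRes (φ : Finset IVar) (Φ : CSet) (U : Usage) : URes → Prop
  | .ok V => URedStar φ Φ U V
  | .err => ∃ W, URedStar φ Φ U W ∧ URed φ Φ W .err

/-- A usage is reliable when no reduction sequence from it leads to an error. -/
def Reliable (φ : Finset IVar) (Φ : CSet) (U : Usage) : Prop :=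
  ∀ V, URedStar φ Φ U V → ¬ URed φ Φ V .err

/-- The subusage relation. -/
inductive SubU (φ : Finset IVar) (Φ : CSet) : Usage → Usage → Prop
  | toNil : SubU φ Φ U .nil
  | choiceElimL : SubU φ Φ (.choice U V) U
  | choiceElimR : SubU φ Φ (.choice U V) V
  | choiceCtxL : SubU φ Φ U U' → SubU φ Φ (.choice U V) (.choice U' V)
  | choiceCtxR : SubU φ Φ V V' → SubU φ Φ (.choice U V) (.choice U V')
  | parCtx : SubU φ Φ U U' → SubU φ Φ (.par U V) (.par U' V)
  | bangCtx : SubU φ Φ U U' → SubU φ Φ (.bang U) (.bang U')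
  | congr : UCongr U U' → SubU φ Φ U' V' → UCongr V' V → SubU φ Φ U V
  | trans : SubU φ Φ U U' → SubU φ Φ U' U'' → SubU φ Φ U U''
  | inpCtx : SubU φ Φ U U' → SubU φ Φ (.inp A c U) (.inp A c U')
  | outCtx : SubU φ Φ U U' → SubU φ Φ (.out A c U) (.out A c U')
  | inpWeak : semIncl φ Φ B A → capLe φ Φ ic jc → SubU φ Φ (.inp A ic U) (.inp B jc U)
  | outWeak : semIncl φ Φ B A → capLe φ Φ ic jc → SubU φ Φ (.out A ic U) (.out B jc U)
  | inpScope : SubU φ Φ (.par (.inp A jc U) (V.delay (A.addCap jc))) (.inp A jc (.par U V))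
  | outScope : SubU φ Φ (.par (.out A jc U) (V.delay (A.addCap jc))) (.out A jc (.par U V))

/-- Subusage extended to reduction results, with the convention that
`Error ⊑ W` for every usage `W` and the only result below `Error` is `Error`. -/
def SubR (φ : Finset IVar) (Φ : CSet) : URes → URes → Prop
  | .err, _ => True
  | .ok _, .err => False
  | .ok U, .ok V => SubU φ Φ U V

/-! Induction on the derivation of `U ⊑ V`. Delaying touches only top-level obligations, so it
commutes with every rule except scope extrusion: there `↑^A ↑^{A'+c} V` must be weakened to
`↑^{(A+A')+c} V`, which holds because index addition is associative. -/

theorem capLe_refl (φ : Finset IVar) (Φ : CSet) (c : Cap) : capLe φ Φ c c := by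
  cases c
  · exact fun _ _ => le_rfl
  · exact ⟨fun _ _ => le_rfl, fun _ _ => le_rfl⟩

theorem semIncl.add_left {φ : Finset IVar} {Φ : CSet} {B B' : Interval}
    (h : semIncl φ Φ B B') (A : Interval) : semIncl φ Φ (A.add B) (A.add B') := fun ρ hρ =>
  ⟨add_le_add_right (h ρ hρ).1 _, add_le_add_right (h ρ hρ).2 _⟩

theorem semIncl.add_right_assoc {φ : Finset IVar} {Φ : CSet} {D B E : Interval}
    (h : semIncl φ Φ E (D.add B)) (C : Interval) :
    semIncl φ Φ (E.add C) (D.add (B.add C)) := fun ρ hρ => by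
  obtain ⟨hlo, hhi⟩ := h ρ hρ
  simp only [Interval.add, Idx.eval, ← add_assoc] at hlo hhi ⊢
  exact ⟨add_le_add_left hlo _, add_le_add_left hhi _⟩

theorem semIncl_add_addCap (φ : Finset IVar) (Φ : CSet) (A A' : Interval) (c : Cap) :
    semIncl φ Φ ((A.add A').addCap c) (A.add (A'.addCap c)) := fun _ _ => by
  cases c <;> simp [Interval.addCap, Interval.add, Idx.eval, add_assoc]

theorem UCongr.delay {U V : Usage} (h : UCongr U V) (A : Interval) :
    UCongr (U.delay A) (V.delay A) := by
  induction h with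
  | refl => exact .refl
  | symm _ ih => exact ih.symm
  | trans _ _ ih₁ ih₂ => exact ih₁.trans ih₂
  | parNil => exact .parNil
  | parComm => exact .parComm
  | parAssoc => exact .parAssoc
  | bangNil => exact .bangNil
  | bangUnfold => exact .bangUnfold
  | bangPar => exact .bangPar
  | bangBang => exact .bangBang
  | parCtx _ _ ih₁ ih₂ => exact .parCtx ih₁ ih₂
  | inpCtx h _ => exact .inpCtx h
  | outCtx h _ => exact .outCtx h
  | bangCtx _ ih => exact .bangCtx ih
  | choiceCtx _ _ ih₁ ih₂ => exact .choiceCtx ih₁ ih₂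

namespace SubU

variable {φ : Finset IVar} {Φ : CSet}

theorem parCtxR {U V V' : Usage} (h : SubU φ Φ V V') : SubU φ Φ (.par U V) (.par U V') :=
  .congr .parComm h.parCtx .parComm

theorem par {U U' V V' : Usage} (hU : SubU φ Φ U U') (hV : SubU φ Φ V V') :
    SubU φ Φ (.par U V) (.par U' V') :=
  hU.parCtx.trans hV.parCtxR

theorem choice {U U' V V' : Usage} (hU : SubU φ Φ U U') (hV : SubU φ Φ V V') :
    SubU φ Φ (.choice U V) (.choice U' V') :=
  hU.choiceCtxL.trans hV.choiceCtxR

theorem delay_delay_of_semIncl {D B E : Interval} (h : semIncl φ Φ E (D.add B)) (V : Usage) :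
    SubU φ Φ ((V.delay B).delay D) (V.delay E) := by
  induction V with
  | nil => exact .toNil
  | par _ _ ihU ihV => exact ihU.par ihV
  | inp C c _ _ => exact .inpWeak (h.add_right_assoc C) (capLe_refl φ Φ c)
  | out C c _ _ => exact .outWeak (h.add_right_assoc C) (capLe_refl φ Φ c)
  | bang _ ih => exact ih.bangCtx
  | choice _ _ ihU ihV => exact ihU.choice ihV

end SubU

/-- The subusage relation is preserved by the delaying operation:
if `φ; Φ ⊢ U ⊑ V` then `φ; Φ ⊢ ↑^{A_o}U ⊑ ↑^{A_o}V` for every obligation interval `A_o`. -/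
theorem subusage_preserved_by_delay (φ : Finset IVar) (Φ : CSet) (U V : Usage)
    (h : SubU φ Φ U V) (A : Interval) :
    SubU φ Φ (U.delay A) (V.delay A) := by
  induction h with
  | toNil => exact .toNil
  | choiceElimL => exact .choiceElimL
  | choiceElimR => exact .choiceElimR
  | choiceCtxL _ ih => exact ih.choiceCtxL
  | choiceCtxR _ ih => exact ih.choiceCtxR
  | parCtx _ ih => exact ih.parCtx
  | bangCtx _ ih => exact ih.bangCtx
  | congr h₁ _ h₂ ih => exact .congr (h₁.delay A) ih (h₂.delay A)
  | trans _ _ ih₁ ih₂ => exact ih₁.trans ih₂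
  | inpCtx h _ => exact .inpCtx h
  | outCtx h _ => exact .outCtx h
  | inpWeak hAB hc => exact .inpWeak (hAB.add_left A) hc
  | outWeak hAB hc => exact .outWeak (hAB.add_left A) hc
  | @inpScope A' c _ V =>
      exact (SubU.delay_delay_of_semIncl (semIncl_add_addCap φ Φ A A' c) V).parCtxR.trans .inpScope
  | @outScope A' c _ V =>
      exact (SubU.delay_delay_of_semIncl (semIncl_add_addCap φ Φ A A' c) V).parCtxR.trans .outScope

end PiSpan
end

section
/- Decomposition of subusage: the subusage relation ⊑ coincides with the reflexive-transitive closure of the relation ⊑_t, where U ⊑_t V holds iff there exist U', V' with U ≡ U', V ≡ V', and U' ⊑_ct V', and ⊑_ct is the subusage relation generated without the congruence and transitivity rules. -/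
namespace PiSpan

/-- The subusage relation generated *without* the congruence and transitivity rules. -/
inductive SubCT (φ : Finset IVar) (Φ : CSet) : Usage → Usage → Prop
  | toNil : SubCT φ Φ U .nil
  | choiceElimL : SubCT φ Φ (.choice U V) U
  | choiceElimR : SubCT φ Φ (.choice U V) V
  | choiceCtxL : SubCT φ Φ U U' → SubCT φ Φ (.choice U V) (.choice U' V)
  | choiceCtxR : SubCT φ Φ V V' → SubCT φ Φ (.choice U V) (.choice U V')
  | parCtx : SubCT φ Φ U U' → SubCT φ Φ (.par U V) (.par U' V)
  | bangCtx : SubCT φ Φ U U' → SubCT φ Φ (.bang U) (.bang U')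
  | inpCtx : SubCT φ Φ U U' → SubCT φ Φ (.inp A c U) (.inp A c U')
  | outCtx : SubCT φ Φ U U' → SubCT φ Φ (.out A c U) (.out A c U')
  | inpWeak : semIncl φ Φ B A → capLe φ Φ ic jc → SubCT φ Φ (.inp A ic U) (.inp B jc U)
  | outWeak : semIncl φ Φ B A → capLe φ Φ ic jc → SubCT φ Φ (.out A ic U) (.out B jc U)
  | inpScope : SubCT φ Φ (.par (.inp A jc U) (V.delay (A.addCap jc))) (.inp A jc (.par U V))
  | outScope : SubCT φ Φ (.par (.out A jc U) (V.delay (A.addCap jc))) (.out A jc (.par U V))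

/-- One step of subusage up to congruence: `U ⊑_t V` iff `U ≡ U'`, `V ≡ V'` and
`U' ⊑_ct V'` for some `U'`, `V'`. -/
def SubT (φ : Finset IVar) (Φ : CSet) (U V : Usage) : Prop :=
  ∃ U' V', UCongr U U' ∧ UCongr V V' ∧ SubCT φ Φ U' V'

/-- An action `α^{A}_{c}.U` : an input if the boolean is `true`, an output otherwise. -/
def act : Bool → Interval → Cap → Usage → Usage
  | true => Usage.inp
  | false => Usage.out

/-- Optional replication: `ost true U = !U` and `ost false U = U`. -/
def ost : Bool → Usage → Usage
  | true, U => .bang U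
  | false, U => U

/-! Every rule of `⊑` other than congruence and transitivity is a rule of `⊑_ct`, and the
context rules of `⊑` lift to chains of `⊑_t` steps because `≡` and `⊑_ct` are both closed
under the same contexts. Conversely each `⊑_t` step is a `⊑_ct` step framed by congruences,
and `⊑` is transitive. -/

section

variable {φ : Finset IVar} {Φ : CSet}

theorem SubCT.refl : ∀ U, SubCT φ Φ U U
  | .nil => .toNil
  | .par U _ => .parCtx (SubCT.refl U)
  | .inp _ _ U => .inpCtx (SubCT.refl U)
  | .out _ _ U => .outCtx (SubCT.refl U)
  | .bang U => .bangCtx (SubCT.refl U)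
  | .choice U _ => .choiceCtxL (SubCT.refl U)

theorem SubCT.subU {U V : Usage} (h : SubCT φ Φ U V) : SubU φ Φ U V := by
  induction h with
  | toNil => exact .toNil
  | choiceElimL => exact .choiceElimL
  | choiceElimR => exact .choiceElimR
  | choiceCtxL _ ih => exact .choiceCtxL ih
  | choiceCtxR _ ih => exact .choiceCtxR ih
  | parCtx _ ih => exact .parCtx ih
  | bangCtx _ ih => exact .bangCtx ih
  | inpCtx _ ih => exact .inpCtx ih
  | outCtx _ ih => exact .outCtx ih
  | inpWeak hA hc => exact .inpWeak hA hc
  | outWeak hA hc => exact .outWeak hA hc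
  | inpScope => exact .inpScope
  | outScope => exact .outScope

theorem SubU.refl (U : Usage) : SubU φ Φ U U :=
  (SubCT.refl U).subU

theorem SubT.subU {U V : Usage} (h : SubT φ Φ U V) : SubU φ Φ U V :=
  let ⟨_, _, hU, hV, hct⟩ := h
  .congr hU hct.subU hV.symm

theorem SubT.of_subCT {U V : Usage} (h : SubCT φ Φ U V) : SubT φ Φ U V :=
  ⟨U, V, .refl, .refl, h⟩

theorem SubT.of_uCongr {U V : Usage} (h : UCongr U V) : SubT φ Φ U V :=
  ⟨V, V, h, .refl, SubCT.refl V⟩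

theorem SubT.reflTransGen_of_subCT {U V : Usage} (h : SubCT φ Φ U V) :
    Relation.ReflTransGen (SubT φ Φ) U V :=
  .single (.of_subCT h)

theorem SubT.reflTransGen_map (f : Usage → Usage)
    (hf_congr : ∀ {U V}, UCongr U V → UCongr (f U) (f V))
    (hf_sub : ∀ {U V}, SubCT φ Φ U V → SubCT φ Φ (f U) (f V)) {U V : Usage}
    (h : Relation.ReflTransGen (SubT φ Φ) U V) :
    Relation.ReflTransGen (SubT φ Φ) (f U) (f V) :=
  h.lift f fun _ _ ⟨U', V', hU, hV, hct⟩ => ⟨f U', f V', hf_congr hU, hf_congr hV, hf_sub hct⟩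

theorem SubU.reflTransGen_subT {U V : Usage} (h : SubU φ Φ U V) :
    Relation.ReflTransGen (SubT φ Φ) U V := by
  induction h with
  | toNil => exact SubT.reflTransGen_of_subCT .toNil
  | choiceElimL => exact SubT.reflTransGen_of_subCT .choiceElimL
  | choiceElimR => exact SubT.reflTransGen_of_subCT .choiceElimR
  | inpWeak hA hc => exact SubT.reflTransGen_of_subCT (.inpWeak hA hc)
  | outWeak hA hc => exact SubT.reflTransGen_of_subCT (.outWeak hA hc)
  | inpScope => exact SubT.reflTransGen_of_subCT .inpScope
  | outScope => exact SubT.reflTransGen_of_subCT .outScope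
  | @choiceCtxL _ _ V _ ih =>
    exact SubT.reflTransGen_map (.choice · V) (.choiceCtx · .refl) .choiceCtxL ih
  | @choiceCtxR _ _ U _ ih =>
    exact SubT.reflTransGen_map (.choice U ·) (.choiceCtx .refl ·) .choiceCtxR ih
  | @parCtx _ _ V _ ih =>
    exact SubT.reflTransGen_map (.par · V) (.parCtx · .refl) .parCtx ih
  | bangCtx _ ih => exact SubT.reflTransGen_map .bang .bangCtx .bangCtx ih
  | @inpCtx _ _ A c _ ih => exact SubT.reflTransGen_map (.inp A c) .inpCtx .inpCtx ih
  | @outCtx _ _ A c _ ih => exact SubT.reflTransGen_map (.out A c) .outCtx .outCtx ih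
  | congr hU _ hV ih => exact .head (.of_uCongr hU) (ih.tail (.of_uCongr hV))
  | trans _ _ ih₁ ih₂ => exact ih₁.trans ih₂

theorem SubU.of_reflTransGen_subT {U V : Usage} (h : Relation.ReflTransGen (SubT φ Φ) U V) :
    SubU φ Φ U V := by
  induction h with
  | refl => exact .refl U
  | tail _ hstep ih => exact .trans ih hstep.subU

end

/-- Decomposition of subusage: the subusage relation coincides
with the reflexive-transitive closure of `⊑_t`. -/
theorem subusage_decomposition (φ : Finset IVar) (Φ : CSet) (U V : Usage) :
    SubU φ Φ U V ↔ Relation.ReflTransGen (SubT φ Φ) U V :=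
  ⟨SubU.reflTransGen_subT, SubU.of_reflTransGen_subT⟩

end PiSpan
end

section
/- Exhaustive description of one-step subusage: if U ⊑_t V, then (writing * for an optional replication, i.e. *W is either W or !W) one of the following holds: U ≡ U₀ | *U₁ and V ≡ U₀; or U ≡ U₀ | *(U₁+U₂) and V ≡ U₀ | *Uᵢ for some i ∈ {1,2}; or U ≡ U₀ | *α^{A_o}_{J_c}.W and V ≡ U₀ | *α^{A_o}_{J_c}.W' with W ⊑_ct W'; or U ≡ U₀ | *(U₁+U₂) and V ≡ U₀ | *(U₁'+U₂) with U₁ ⊑_ct U₁'; or U ≡ U₀ | *(U₁+U₂) and V ≡ U₀ | *(U₁+U₂') with U₂ ⊑_ct U₂'; or U ≡ U₀ | *α^{A_o}_{J_c}.W and V ≡ U₀ | *α^{A_o'}_{J_c'}.W with A_o' ⊆ A_o and J_c ≤ J_c'; or U ≡ U₀ | *((α^{A_o}_{J_c}.W) | (↑^{A_o+J_c}U₁)) and V ≡ U₀ | *α^{A_o}_{J_c}.(W | U₁). -/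
namespace PiSpan

theorem ucong_nilpar (U : Usage) : UCongr U (.par .nil U) :=
  .symm (.trans .parComm .parNil)

theorem ucong_swap23 (a b c : Usage) :
    UCongr (.par (.par a b) c) (.par (.par a c) b) :=
  .trans (.symm .parAssoc) (.trans (.parCtx .refl .parComm) .parAssoc)

theorem ucong_parpush {W U₀ Y : Usage} (X : Usage) (h : UCongr W (.par U₀ Y)) :
    UCongr (.par W X) (.par (.par U₀ X) Y) :=
  .trans (.parCtx h .refl) (ucong_swap23 _ _ _)

theorem ucong_bangify {W U₀ : Usage} {b : Bool} {Y : Usage}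
    (h : UCongr W (.par U₀ (ost b Y))) :
    UCongr (.bang W) (.par (.bang U₀) (ost true Y)) := by
  refine .trans (.bangCtx h) (.trans .bangPar (.parCtx .refl ?_))
  cases b
  · exact .refl
  · exact .bangBang

def Cases (φ : Finset IVar) (Φ : CSet) (U V : Usage) : Prop :=
    (∃ b U₀ U₁, UCongr U (.par U₀ (ost b U₁)) ∧ UCongr V U₀) ∨
    (∃ b U₀ U₁ U₂, UCongr U (.par U₀ (ost b (.choice U₁ U₂))) ∧
        (UCongr V (.par U₀ (ost b U₁)) ∨ UCongr V (.par U₀ (ost b U₂)))) ∨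
    (∃ b α U₀ A c W W', UCongr U (.par U₀ (ost b (act α A c W))) ∧
        UCongr V (.par U₀ (ost b (act α A c W'))) ∧ SubCT φ Φ W W') ∨
    (∃ b U₀ U₁ U₁' U₂, UCongr U (.par U₀ (ost b (.choice U₁ U₂))) ∧
        UCongr V (.par U₀ (ost b (.choice U₁' U₂))) ∧ SubCT φ Φ U₁ U₁') ∨
    (∃ b U₀ U₁ U₂ U₂', UCongr U (.par U₀ (ost b (.choice U₁ U₂))) ∧
        UCongr V (.par U₀ (ost b (.choice U₁ U₂'))) ∧ SubCT φ Φ U₂ U₂') ∨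
    (∃ b α U₀ A A' c c' W, UCongr U (.par U₀ (ost b (act α A c W))) ∧
        UCongr V (.par U₀ (ost b (act α A' c' W))) ∧
        semIncl φ Φ A' A ∧ capLe φ Φ c c') ∨
    (∃ b α U₀ A c W U₁,
        UCongr U (.par U₀ (ost b (.par (act α A c W) (U₁.delay (A.addCap c))))) ∧
        UCongr V (.par U₀ (ost b (act α A c (.par W U₁)))))

theorem Cases.congr {φ : Finset IVar} {Φ : CSet} {U U' V V' : Usage}
    (hU : UCongr U U') (hV : UCongr V V')
    (h : Cases φ Φ U' V') : Cases φ Φ U V := by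
  rcases h with ⟨b, U₀, U₁, h1, h2⟩ | ⟨b, U₀, U₁, U₂, h1, h2⟩ |
    ⟨b, α, U₀, A, c, W, W', h1, h2, h3⟩ | ⟨b, U₀, U₁, U₁', U₂, h1, h2, h3⟩ |
    ⟨b, U₀, U₁, U₂, U₂', h1, h2, h3⟩ | ⟨b, α, U₀, A, A', c, c', W, h1, h2, h3, h4⟩ |
    ⟨b, α, U₀, A, c, W, U₁, h1, h2⟩
  · exact Or.inl ⟨b, U₀, U₁, hU.trans h1, hV.trans h2⟩
  · exact Or.inr (Or.inl ⟨b, U₀, U₁, U₂, hU.trans h1, h2.imp hV.trans hV.trans⟩)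
  · exact Or.inr (Or.inr (Or.inl ⟨b, α, U₀, A, c, W, W', hU.trans h1, hV.trans h2, h3⟩))
  · exact Or.inr (Or.inr (Or.inr (Or.inl
      ⟨b, U₀, U₁, U₁', U₂, hU.trans h1, hV.trans h2, h3⟩)))
  · exact Or.inr (Or.inr (Or.inr (Or.inr (Or.inl
      ⟨b, U₀, U₁, U₂, U₂', hU.trans h1, hV.trans h2, h3⟩))))
  · exact Or.inr (Or.inr (Or.inr (Or.inr (Or.inr (Or.inl
      ⟨b, α, U₀, A, A', c, c', W, hU.trans h1, hV.trans h2, h3, h4⟩)))))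
  · exact Or.inr (Or.inr (Or.inr (Or.inr (Or.inr (Or.inr
      ⟨b, α, U₀, A, c, W, U₁, hU.trans h1, hV.trans h2⟩)))))

theorem Cases.parRight {φ : Finset IVar} {Φ : CSet} {W W' : Usage} (X : Usage)
    (h : Cases φ Φ W W') : Cases φ Φ (.par W X) (.par W' X) := by
  rcases h with ⟨b, U₀, U₁, h1, h2⟩ | ⟨b, U₀, U₁, U₂, h1, h2⟩ |
    ⟨b, α, U₀, A, c, Wa, Wb, h1, h2, h3⟩ | ⟨b, U₀, U₁, U₁', U₂, h1, h2, h3⟩ |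
    ⟨b, U₀, U₁, U₂, U₂', h1, h2, h3⟩ | ⟨b, α, U₀, A, A', c, c', Wa, h1, h2, h3, h4⟩ |
    ⟨b, α, U₀, A, c, Wa, U₁, h1, h2⟩
  · exact Or.inl ⟨b, .par U₀ X, U₁, ucong_parpush X h1, .parCtx h2 .refl⟩
  · exact Or.inr (Or.inl ⟨b, .par U₀ X, U₁, U₂, ucong_parpush X h1,
      h2.imp (ucong_parpush X) (ucong_parpush X)⟩)
  · exact Or.inr (Or.inr (Or.inl ⟨b, α, .par U₀ X, A, c, Wa, Wb,
      ucong_parpush X h1, ucong_parpush X h2, h3⟩))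
  · exact Or.inr (Or.inr (Or.inr (Or.inl ⟨b, .par U₀ X, U₁, U₁', U₂,
      ucong_parpush X h1, ucong_parpush X h2, h3⟩)))
  · exact Or.inr (Or.inr (Or.inr (Or.inr (Or.inl ⟨b, .par U₀ X, U₁, U₂, U₂',
      ucong_parpush X h1, ucong_parpush X h2, h3⟩))))
  · exact Or.inr (Or.inr (Or.inr (Or.inr (Or.inr (Or.inl
      ⟨b, α, .par U₀ X, A, A', c, c', Wa, ucong_parpush X h1, ucong_parpush X h2, h3, h4⟩)))))
  · exact Or.inr (Or.inr (Or.inr (Or.inr (Or.inr (Or.inr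
      ⟨b, α, .par U₀ X, A, c, Wa, U₁, ucong_parpush X h1, ucong_parpush X h2⟩)))))

theorem Cases.bang {φ : Finset IVar} {Φ : CSet} {W W' : Usage}
    (h : Cases φ Φ W W') : Cases φ Φ (.bang W) (.bang W') := by
  rcases h with ⟨b, U₀, U₁, h1, h2⟩ | ⟨b, U₀, U₁, U₂, h1, h2⟩ |
    ⟨b, α, U₀, A, c, Wa, Wb, h1, h2, h3⟩ | ⟨b, U₀, U₁, U₁', U₂, h1, h2, h3⟩ |
    ⟨b, U₀, U₁, U₂, U₂', h1, h2, h3⟩ | ⟨b, α, U₀, A, A', c, c', Wa, h1, h2, h3, h4⟩ |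
    ⟨b, α, U₀, A, c, Wa, U₁, h1, h2⟩
  · exact Or.inl ⟨true, .bang U₀, U₁, ucong_bangify h1, .bangCtx h2⟩
  · exact Or.inr (Or.inl ⟨true, .bang U₀, U₁, U₂, ucong_bangify h1,
      h2.imp ucong_bangify ucong_bangify⟩)
  · exact Or.inr (Or.inr (Or.inl ⟨true, α, .bang U₀, A, c, Wa, Wb,
      ucong_bangify h1, ucong_bangify h2, h3⟩))
  · exact Or.inr (Or.inr (Or.inr (Or.inl ⟨true, .bang U₀, U₁, U₁', U₂,
      ucong_bangify h1, ucong_bangify h2, h3⟩)))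
  · exact Or.inr (Or.inr (Or.inr (Or.inr (Or.inl ⟨true, .bang U₀, U₁, U₂, U₂',
      ucong_bangify h1, ucong_bangify h2, h3⟩))))
  · exact Or.inr (Or.inr (Or.inr (Or.inr (Or.inr (Or.inl
      ⟨true, α, .bang U₀, A, A', c, c', Wa, ucong_bangify h1, ucong_bangify h2, h3, h4⟩)))))
  · exact Or.inr (Or.inr (Or.inr (Or.inr (Or.inr (Or.inr
      ⟨true, α, .bang U₀, A, c, Wa, U₁, ucong_bangify h1, ucong_bangify h2⟩)))))

theorem cases_of_subCT {φ : Finset IVar} {Φ : CSet} {U V : Usage}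
    (h : SubCT φ Φ U V) : Cases φ Φ U V := by
  induction h with
  | @toNil W => exact Or.inl ⟨false, .nil, W, ucong_nilpar W, .refl⟩
  | @choiceElimL W X => exact Or.inr (Or.inl ⟨false, .nil, W, X, ucong_nilpar _,
      Or.inl (ucong_nilpar _)⟩)
  | @choiceElimR W X => exact Or.inr (Or.inl ⟨false, .nil, W, X, ucong_nilpar _,
      Or.inr (ucong_nilpar _)⟩)
  | @choiceCtxL W W' X h _ => exact Or.inr (Or.inr (Or.inr (Or.inl
      ⟨false, .nil, W, W', X, ucong_nilpar _, ucong_nilpar _, h⟩)))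
  | @choiceCtxR X X' W h _ =>
      exact Or.inr (Or.inr (Or.inr (Or.inr (Or.inl
        ⟨false, .nil, W, X, X', ucong_nilpar _, ucong_nilpar _, h⟩))))
  | @parCtx W W' X _ ih => exact ih.parRight X
  | @bangCtx W W' _ ih => exact ih.bang
  | @inpCtx W W' A c h _ => exact Or.inr (Or.inr (Or.inl
      ⟨false, true, .nil, A, c, W, W', ucong_nilpar _, ucong_nilpar _, h⟩))
  | @outCtx W W' A c h _ => exact Or.inr (Or.inr (Or.inl
      ⟨false, false, .nil, A, c, W, W', ucong_nilpar _, ucong_nilpar _, h⟩))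
  | @inpWeak B A ic jc W h1 h2 => exact Or.inr (Or.inr (Or.inr (Or.inr (Or.inr (Or.inl
      ⟨false, true, .nil, A, B, ic, jc, W, ucong_nilpar _, ucong_nilpar _, h1, h2⟩)))))
  | @outWeak B A ic jc W h1 h2 => exact Or.inr (Or.inr (Or.inr (Or.inr (Or.inr (Or.inl
      ⟨false, false, .nil, A, B, ic, jc, W, ucong_nilpar _, ucong_nilpar _, h1, h2⟩)))))
  | @inpScope A jc W X => exact Or.inr (Or.inr (Or.inr (Or.inr (Or.inr (Or.inr
      ⟨false, true, .nil, A, jc, W, X, ucong_nilpar _, ucong_nilpar _⟩)))))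
  | @outScope A jc W X => exact Or.inr (Or.inr (Or.inr (Or.inr (Or.inr (Or.inr
      ⟨false, false, .nil, A, jc, W, X, ucong_nilpar _, ucong_nilpar _⟩)))))

/-- Exhaustive description of one-step subusage `⊑_t`
(the boolean `b` encodes an optional replication `*`, and the boolean `α` an
input or output action). -/
theorem subT_exhaustive (φ : Finset IVar) (Φ : CSet) (U V : Usage)
    (h : SubT φ Φ U V) :
    (∃ b U₀ U₁, UCongr U (.par U₀ (ost b U₁)) ∧ UCongr V U₀) ∨
    (∃ b U₀ U₁ U₂, UCongr U (.par U₀ (ost b (.choice U₁ U₂))) ∧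
        (UCongr V (.par U₀ (ost b U₁)) ∨ UCongr V (.par U₀ (ost b U₂)))) ∨
    (∃ b α U₀ A c W W', UCongr U (.par U₀ (ost b (act α A c W))) ∧
        UCongr V (.par U₀ (ost b (act α A c W'))) ∧ SubCT φ Φ W W') ∨
    (∃ b U₀ U₁ U₁' U₂, UCongr U (.par U₀ (ost b (.choice U₁ U₂))) ∧
        UCongr V (.par U₀ (ost b (.choice U₁' U₂))) ∧ SubCT φ Φ U₁ U₁') ∨
    (∃ b U₀ U₁ U₂ U₂', UCongr U (.par U₀ (ost b (.choice U₁ U₂))) ∧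
        UCongr V (.par U₀ (ost b (.choice U₁ U₂'))) ∧ SubCT φ Φ U₂ U₂') ∨
    (∃ b α U₀ A A' c c' W, UCongr U (.par U₀ (ost b (act α A c W))) ∧
        UCongr V (.par U₀ (ost b (act α A' c' W))) ∧
        semIncl φ Φ A' A ∧ capLe φ Φ c c') ∨
    (∃ b α U₀ A c W U₁,
        UCongr U (.par U₀ (ost b (.par (act α A c W) (U₁.delay (A.addCap c))))) ∧
        UCongr V (.par U₀ (ost b (act α A c (.par W U₁))))) := by
  obtain ⟨U', V', hU, hV, hct⟩ := h
  exact Cases.congr hU hV (cases_of_subCT hct)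

end PiSpan
end

section
/- If V ≡ U₀ | !U₁ (usage congruence) and φ; Φ ⊢ V ⟶ V' (one step of usage reduction), then V' ≡ W | !U₁ for some usage W with φ; Φ ⊢ U₀ | U₁ ⟶ W. -/
namespace PiSpan

/-!
Congruence classes of usages form a commutative monoid under `|`, on which `!` is additive,
idempotent and absorbs its argument (`!x | x = !x`). A class is therefore determined by its
normal form: the set of its replicated atoms together with the multiset of its linear atoms not
absorbed by them. A reduction step of `V` fires a redex `P` (an input against an output, or a
choice) made of pairwise distinct atoms, with `V ≡ P | Y`. Comparing the normal forms of `P | Y`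
and `U₀ | !U₁` shows that each atom of `P` is either linear in `U₀ | U₁` or replicated there;
since the atoms are distinct, a single copy of `U₁` suffices, so `U₀ | U₁ ≡ P | Z` with
`Y ≡ Z | !U₁`, and `U₀ | U₁` performs the same step.
-/

instance UCongr.setoid : Setoid Usage := ⟨UCongr, ⟨fun _ => .refl, .symm, .trans⟩⟩

abbrev UClass := Quotient UCongr.setoid

namespace UClass

noncomputable instance : DecidableEq UClass := Classical.decEq _

instance : Add UClass := ⟨Quotient.map₂ Usage.par fun _ _ h _ _ h' => UCongr.parCtx h h'⟩

instance : Zero UClass := ⟨⟦.nil⟧⟩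

instance : AddCommMonoid UClass where
  add_assoc := by rintro ⟨U⟩ ⟨V⟩ ⟨W⟩; exact Quotient.sound (.symm .parAssoc)
  zero_add := by rintro ⟨U⟩; exact Quotient.sound (.trans .parComm .parNil)
  add_zero := by rintro ⟨U⟩; exact Quotient.sound .parNil
  add_comm := by rintro ⟨U⟩ ⟨V⟩; exact Quotient.sound .parComm
  nsmul := nsmulRec

def bang : UClass →+ UClass where
  toFun := Quotient.map Usage.bang fun _ _ => UCongr.bangCtx
  map_zero' := Quotient.sound .bangNil
  map_add' := by rintro ⟨U⟩ ⟨V⟩; exact Quotient.sound .bangPar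

@[simp] lemma bang_add_self (x : UClass) : bang x + x = bang x := by
  induction x using Quotient.inductionOn with
  | h U => exact Quotient.sound (.symm .bangUnfold)

@[simp] lemma bang_bang (x : UClass) : bang (bang x) = bang x := by
  induction x using Quotient.inductionOn with
  | h U => exact Quotient.sound .bangBang

@[simp] lemma bang_add_bang (x : UClass) : bang x + bang x = bang x := by
  simpa using bang_add_self (bang x)

lemma add_sum_bang_of_mem {R : Finset UClass} {x : UClass} (hx : x ∈ R) :
    x + ∑ y ∈ R, bang y = ∑ y ∈ R, bang y := by
  rw [← Finset.add_sum_erase _ _ hx, ← add_assoc, add_comm x, bang_add_self]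

lemma multiset_sum_add_sum_bang {R : Finset UClass} {A : Multiset UClass}
    (hA : ∀ a ∈ A, a ∈ R) : A.sum + ∑ y ∈ R, bang y = ∑ y ∈ R, bang y := by
  induction A using Multiset.induction with
  | empty => simp
  | cons a A ih =>
    rw [Multiset.sum_cons, add_assoc, ih fun b hb => hA b (Multiset.mem_cons_of_mem hb),
      add_sum_bang_of_mem (hA a (Multiset.mem_cons_self a A))]

lemma sum_bang_add_sum_bang_of_subset {R S : Finset UClass} (h : S ⊆ R) :
    ∑ y ∈ S, bang y + ∑ y ∈ R, bang y = ∑ y ∈ R, bang y := by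
  rw [← Finset.sum_sdiff h, add_left_comm, ← Finset.sum_add_distrib]
  simp only [bang_add_bang]

lemma sum_bang_union (R S : Finset UClass) :
    ∑ y ∈ R ∪ S, bang y = ∑ y ∈ R, bang y + ∑ y ∈ S, bang y := by
  rw [← Finset.sum_union_inter, add_comm,
    sum_bang_add_sum_bang_of_subset Finset.inter_subset_union]

lemma bang_multiset_sum (A : Multiset UClass) : bang A.sum = ∑ y ∈ A.toFinset, bang y := by
  induction A using Multiset.induction with
  | empty => simp
  | cons a A ih =>
    rw [Multiset.sum_cons, map_add, ih, Multiset.toFinset_cons, Finset.insert_eq,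
      sum_bang_union, Finset.sum_singleton]

end UClass

/-- A usage `L | !R₁ | … | !Rₖ` kept as the multiset `L` of its linear atoms and the set
of its replicated atoms `Rᵢ`, all taken up to congruence. -/
@[ext] structure NormalForm where
  rep : Finset UClass
  lin : Multiset UClass

namespace NormalForm

open UClass

def nil : NormalForm := ⟨∅, 0⟩

def atom (a : UClass) : NormalForm := ⟨∅, {a}⟩

/-- Linear atoms that are also replicated are absorbed by the replicated ones. -/
noncomputable def par (p q : NormalForm) : NormalForm :=
  ⟨p.rep ∪ q.rep, (p.lin + q.lin).filter (· ∉ p.rep ∪ q.rep)⟩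

noncomputable def bang (p : NormalForm) : NormalForm := ⟨p.rep ∪ p.lin.toFinset, 0⟩

def Reduced (p : NormalForm) : Prop := ∀ a ∈ p.lin, a ∉ p.rep

noncomputable def eval (p : NormalForm) : UClass := p.lin.sum + ∑ y ∈ p.rep, UClass.bang y

lemma eval_add (p q : NormalForm) : p.eval + q.eval = eval ⟨p.rep ∪ q.rep, p.lin + q.lin⟩ := by
  simp only [eval, sum_bang_union, Multiset.sum_add]
  abel

lemma eval_add_lin_of_subset {R : Finset UClass} {A : Multiset UClass} (hA : ∀ a ∈ A, a ∈ R)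
    (L : Multiset UClass) : eval ⟨R, A + L⟩ = eval ⟨R, L⟩ := by
  simp only [eval, Multiset.sum_add]
  rw [add_comm A.sum, add_assoc, multiset_sum_add_sum_bang hA]

lemma eval_filter_not_mem (R : Finset UClass) (L : Multiset UClass) :
    eval ⟨R, L.filter (· ∉ R)⟩ = eval ⟨R, L⟩ := by
  conv_rhs => rw [← Multiset.filter_add_not (· ∈ R) L]
  exact (eval_add_lin_of_subset (fun a ha => (Multiset.mem_filter.1 ha).2) _).symm

lemma eval_par (p q : NormalForm) : (p.par q).eval = p.eval + q.eval := by
  rw [eval_add]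
  exact eval_filter_not_mem _ _

lemma eval_bang (p : NormalForm) : p.bang.eval = UClass.bang p.eval := by
  simp [eval, NormalForm.bang, sum_bang_union, bang_multiset_sum, map_sum, add_comm]

lemma par_comm (p q : NormalForm) : p.par q = q.par p := by
  simp only [par, Finset.union_comm p.rep, add_comm p.lin]

lemma par_assoc (p q r : NormalForm) : (p.par q).par r = p.par (q.par r) := by
  ext1
  · exact Finset.union_assoc _ _ _
  · simp only [par, Multiset.filter_add, Multiset.filter_filter, Finset.mem_union]
    rw [add_assoc]
    refine congrArg₂ (· + ·) ?_ (congrArg₂ (· + ·) ?_ ?_) <;>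
      exact Multiset.filter_congr fun _ _ => by tauto

lemma par_nil {p : NormalForm} (hp : p.Reduced) : p.par nil = p := by
  ext1
  · exact Finset.union_empty _
  · simp only [par, nil, Finset.union_empty, add_zero]
    exact Multiset.filter_eq_self.2 hp

lemma bang_par_self (p : NormalForm) : p.bang.par p = p.bang := by
  ext a <;> simp [par, bang] <;> tauto

lemma bang_par (p q : NormalForm) : (p.par q).bang = p.bang.par q.bang := by
  ext a
  · simp only [bang, par, Finset.mem_union, Multiset.mem_toFinset, Multiset.mem_filter,
      Multiset.mem_add]
    tauto
  · simp [bang, par]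

lemma bang_bang (p : NormalForm) : p.bang.bang = p.bang := by
  simp [bang]

end NormalForm

namespace Usage

open NormalForm

noncomputable def nf : Usage → NormalForm
  | .nil => NormalForm.nil
  | .par U V => U.nf.par V.nf
  | .inp A c U => atom ⟦.inp A c U⟧
  | .out A c U => atom ⟦.out A c U⟧
  | .bang U => U.nf.bang
  | .choice U V => atom ⟦.choice U V⟧

lemma nf_reduced (U : Usage) : U.nf.Reduced := by
  induction U with
  | par U V _ _ => exact fun a ha => (Multiset.mem_filter.1 ha).2
  | _ => simp [nf, Reduced, NormalForm.nil, atom, NormalForm.bang]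

lemma eval_nf (U : Usage) : U.nf.eval = ⟦U⟧ := by
  induction U with
  | nil => simp [nf, eval, NormalForm.nil]; rfl
  | par U V ihU ihV => rw [nf, eval_par, ihU, ihV]; rfl
  | bang U ih => rw [nf, eval_bang, ih]; rfl
  | _ => simp [nf, eval, atom]

lemma nf_eq_of_ucongr {U V : Usage} (h : UCongr U V) : U.nf = V.nf := by
  induction h with
  | refl => rfl
  | symm _ ih => exact ih.symm
  | trans _ _ ih ih' => exact ih.trans ih'
  | parNil => exact par_nil (nf_reduced _)
  | parComm => exact par_comm _ _
  | parAssoc => exact (par_assoc _ _ _).symm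
  | bangNil => rfl
  | bangUnfold => exact (bang_par_self _).symm
  | bangPar => exact bang_par _ _
  | bangBang => exact NormalForm.bang_bang _
  | parCtx _ _ ih ih' => exact congrArg₂ NormalForm.par ih ih'
  | inpCtx h => exact congrArg atom (Quotient.sound (.inpCtx h))
  | outCtx h => exact congrArg atom (Quotient.sound (.outCtx h))
  | bangCtx _ ih => exact congrArg NormalForm.bang ih
  | choiceCtx h h' => exact congrArg atom (Quotient.sound (.choiceCtx h h'))

end Usage

namespace UClass

open NormalForm

noncomputable def nf : UClass → NormalForm := Quotient.lift Usage.nf fun _ _ => Usage.nf_eq_of_ucongr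

lemma nf_add (x y : UClass) : nf (x + y) = (nf x).par (nf y) := by
  induction x, y using Quotient.inductionOn₂ with
  | h U V => rfl

lemma nf_bang (x : UClass) : nf (bang x) = (nf x).bang := by
  induction x using Quotient.inductionOn with
  | h U => rfl

lemma eval_nf (x : UClass) : (nf x).eval = x := by
  induction x using Quotient.inductionOn with
  | h U => exact U.eval_nf

lemma nf_eq_of_add_eq_add_bang {x y u₀ u₁ : UClass} (hrep : (nf x).rep = ∅)
    (h : x + y = u₀ + bang u₁) :
    (nf y).rep = (nf u₀).rep ∪ (nf u₁).rep ∪ (nf u₁).lin.toFinset ∧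
      (nf x).lin.filter (· ∉ (nf y).rep) + (nf y).lin.filter (· ∉ (nf y).rep) =
        (nf u₀).lin.filter (· ∉ (nf y).rep) := by
  have hnf := congrArg nf h
  rw [nf_add, nf_add, nf_bang] at hnf
  have hrep_y : (nf y).rep = (nf u₀).rep ∪ (nf u₁).rep ∪ (nf u₁).lin.toFinset := by
    simpa [par, NormalForm.bang, hrep, Finset.union_assoc] using congrArg rep hnf
  refine ⟨hrep_y, ?_⟩
  have hlin := congrArg lin hnf
  simp only [par, NormalForm.bang, hrep, Finset.empty_union, add_zero] at hlin
  rw [← Finset.union_assoc, ← hrep_y] at hlin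
  rwa [← Multiset.filter_add]

def IsNodupLinear (x : UClass) : Prop := (nf x).rep = ∅ ∧ (nf x).lin.Nodup

lemma exists_split_of_add_eq_add_bang {x y u₀ u₁ : UClass} (hx : x.IsNodupLinear)
    (h : x + y = u₀ + bang u₁) : ∃ z, u₀ + u₁ = x + z ∧ y = z + bang u₁ := by
  obtain ⟨hrep, hnodup⟩ := hx
  obtain ⟨hR, hlin⟩ := nf_eq_of_add_eq_add_bang hrep h
  set R := (nf y).rep
  set R' := (nf u₀).rep ∪ (nf u₁).rep
  set Lx' := (nf x).lin.filter (· ∉ R')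
  have hle : Lx' ≤ (nf u₀).lin + (nf u₁).lin := by
    refine (Multiset.le_iff_subset (hnodup.filter _)).2 fun a ha => ?_
    obtain ⟨hax, haR'⟩ := Multiset.mem_filter.1 ha
    by_cases ha₁ : a ∈ (nf u₁).lin
    · exact Multiset.mem_add.2 (Or.inr ha₁)
    have haR : a ∉ R := by
      simp only [hR, Finset.mem_union, Multiset.mem_toFinset, not_or]
      exact ⟨haR', ha₁⟩
    have : a ∈ (nf u₀).lin.filter (· ∉ R) :=
      hlin ▸ Multiset.mem_add.2 (Or.inl (Multiset.mem_filter.2 ⟨hax, haR⟩))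
    exact Multiset.mem_add.2 (Or.inl (Multiset.mem_filter.1 this).1)
  -- `z` is `u₀ | u₁` less those atoms of `x` that are not replicated in it.
  refine ⟨eval ⟨R', (nf u₀).lin + (nf u₁).lin - Lx'⟩, ?_, ?_⟩
  · calc u₀ + u₁ = (nf u₀).eval + (nf u₁).eval := by rw [eval_nf, eval_nf]
      _ = eval ⟨R', (nf u₀).lin + (nf u₁).lin⟩ := eval_add _ _
      _ = eval ⟨R', (nf x).lin.filter (· ∈ R') + (Lx' + ((nf u₀).lin + (nf u₁).lin - Lx'))⟩ := by
          rw [add_tsub_cancel_of_le hle,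
            eval_add_lin_of_subset fun a ha => (Multiset.mem_filter.1 ha).2]
      _ = (nf x).eval + eval ⟨R', (nf u₀).lin + (nf u₁).lin - Lx'⟩ := by
          rw [← add_assoc, Multiset.filter_add_not, eval_add, hrep, Finset.empty_union]
      _ = x + _ := by rw [eval_nf]
  · have hsub : (nf y).lin.filter (· ∉ R) =
        ((nf u₀).lin + (nf u₁).lin - Lx').filter (· ∉ R) := by
      have h₁ : (nf u₁).lin.filter (· ∉ R) = 0 :=
        Multiset.filter_eq_nil.2 fun a ha => by simp [hR, ha]
      have hx : Lx'.filter (· ∉ R) = (nf x).lin.filter (· ∉ R) := by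
        rw [Multiset.filter_filter]
        exact Multiset.filter_congr fun a _ => by simp only [hR, R', Finset.mem_union]; tauto
      rw [Multiset.filter_sub, Multiset.filter_add, h₁, add_zero, ← hlin, hx, add_tsub_cancel_left]
    calc y = eval ⟨R, (nf y).lin⟩ := (eval_nf y).symm
      _ = eval ⟨R, (nf u₀).lin + (nf u₁).lin - Lx'⟩ := by
          rw [← eval_filter_not_mem, hsub, eval_filter_not_mem]
      _ = eval ⟨R', (nf u₀).lin + (nf u₁).lin - Lx'⟩ + (nf u₁).bang.eval := by
          have hR' : R' ∪ (nf u₁).bang.rep = R := by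
            ext
            simp only [hR, R', NormalForm.bang, Finset.mem_union]
            tauto
          rw [eval_add, hR']
          simp only [NormalForm.bang, add_zero]
      _ = _ := by rw [eval_bang, eval_nf]

end UClass

def Usage.HasOutput : Usage → Prop
  | .out _ _ _ => True
  | .par U V => U.HasOutput ∨ V.HasOutput
  | .bang U => U.HasOutput
  | _ => False

lemma UCongr.hasOutput_iff {U V : Usage} (h : UCongr U V) : U.HasOutput ↔ V.HasOutput := by
  induction h <;> simp_all [Usage.HasOutput] <;> tauto

namespace UClass

open NormalForm

lemma mk_inp_ne_mk_out {A B : Interval} {ic jc : Cap} {W X : Usage} :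
    (⟦.inp A ic W⟧ : UClass) ≠ ⟦.out B jc X⟧ := fun h => by
  simpa [Usage.HasOutput] using (Quotient.exact h).hasOutput_iff

lemma isNodupLinear_inp_par_out {A B : Interval} {ic jc : Cap} {W X : Usage} :
    IsNodupLinear ⟦(Usage.inp A ic W).par (.out B jc X)⟧ := by
  refine ⟨by simp [nf, Usage.nf, par, atom], ?_⟩
  simpa [nf, Usage.nf, par, atom] using mk_inp_ne_mk_out

lemma isNodupLinear_choice {U V : Usage} : IsNodupLinear ⟦U.choice V⟧ :=
  ⟨rfl, Multiset.nodup_singleton _⟩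

end UClass

theorem URed.exists_redex {φ : Finset IVar} {Φ : CSet} {V V' : Usage}
    (h : URed φ Φ V (.ok V')) : ∃ P P' Y, UClass.IsNodupLinear ⟦P⟧ ∧ URed φ Φ P (.ok P') ∧
      UCongr V (P.par Y) ∧ UCongr V' (P'.par Y) := by
  generalize hR : URes.ok V' = R at h
  induction h generalizing V' with
  | comm hs =>
    cases hR
    exact ⟨_, _, .nil, UClass.isNodupLinear_inp_par_out, .comm hs, .symm .parNil, .symm .parNil⟩
  | choiceL =>
    cases hR
    exact ⟨_, _, .nil, UClass.isNodupLinear_choice, .choiceL, .symm .parNil, .symm .parNil⟩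
  | choiceR =>
    cases hR
    exact ⟨_, _, .nil, UClass.isNodupLinear_choice, .choiceR, .symm .parNil, .symm .parNil⟩
  | parCtx _ ih =>
    cases hR
    obtain ⟨P, P', Y, hP, hstep, hU, hU'⟩ := ih rfl
    exact ⟨P, P', Y.par _, hP, hstep, (UCongr.parCtx hU .refl).trans (.symm .parAssoc),
      (UCongr.parCtx hU' .refl).trans (.symm .parAssoc)⟩
  | congr hU _ hres ih =>
    cases hR
    cases hres with
    | ok hc =>
      obtain ⟨P, P', Y, hP, hstep, hU₀, hU'⟩ := ih rfl
      exact ⟨P, P', Y, hP, hstep, hU.trans hU₀, hc.symm.trans hU'⟩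
  | commErr | parErr => cases hR

/-- If `V ≡ U₀ | !U₁` and `φ; Φ ⊢ V ⟶ V'` (one step of usage
reduction), then `V' ≡ W | !U₁` for some usage `W` with `φ; Φ ⊢ U₀ | U₁ ⟶ W`. -/
theorem replication_and_reduction (φ : Finset IVar) (Φ : CSet) (V U₀ U₁ V' : Usage)
    (hcong : UCongr V (.par U₀ (.bang U₁))) (hred : URed φ Φ V (.ok V')) :
    ∃ W : Usage, UCongr V' (.par W (.bang U₁)) ∧ URed φ Φ (.par U₀ U₁) (.ok W) := by
  obtain ⟨P, P', Y, hP, hstep, hV, hV'⟩ := hred.exists_redex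
  have h : (⟦P⟧ : UClass) + ⟦Y⟧ = ⟦U₀⟧ + UClass.bang ⟦U₁⟧ := Quotient.sound (hV.symm.trans hcong)
  obtain ⟨z, hsplit, hY⟩ := UClass.exists_split_of_add_eq_add_bang hP h
  obtain ⟨Z, rfl⟩ := Quotient.exists_rep z
  exact ⟨P'.par Z, hV'.trans ((UCongr.parCtx .refl (Quotient.exact hY)).trans .parAssoc),
    .congr (Quotient.exact hsplit) (.parCtx hstep) (.ok .refl)⟩

end PiSpan
end
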